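/- arXiv:2001.08673 — 3 statements merged into one kernel-verified Lean document; each statement's English description precedes it below -/
import Mathlib

section
/- Let M be a bimodule over an algebra A. Then M has a left dual in the monoidal category of A-bimodules if and only if M is finitely generated and projective as a right A-module; dually, M has a right dual if and only if M is finitely generated and projective as a left A-module. -/
open MulOpposite Finset

section aux

variable (A M : Type) [Ring A] [AddCommGroup M] [Module A M] [Module Aᵐᵒᵖ M]
  [SMulCommClass A Aᵐᵒᵖ M]

/-- Left multiplication by `a : A` as an `Aᵐᵒᵖ`-linear map. -/
def stmt8.lmulA (a : A) : M →ₗ[Aᵐᵒᵖ] M where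
  toFun z := a • z
  map_add' := smul_add a
  map_smul' c z := smul_comm a c z

/-- Right multiplication by `a : A` (i.e. `op a • ·`) as an `A`-linear map. -/
def stmt8.rmulA (a : A) : M →ₗ[A] M where
  toFun z := op a • z
  map_add' := smul_add (op a)
  map_smul' c z := (smul_comm c (op a) z).symm

/-- The "other side" module structure on `M →ₗ[Aᵐᵒᵖ] A` acting through the domain. -/
def stmt8.dualModOp : Module Aᵐᵒᵖ (M →ₗ[Aᵐᵒᵖ] A) where
  smul c f := f ∘ₗ stmt8.lmulA A M (unop c)
  one_smul f := by
    ext z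
    show f (unop (1 : Aᵐᵒᵖ) • z) = f z
    rw [unop_one, one_smul]
  mul_smul c c' f := by
    ext z
    show f (unop (c * c') • z) = f (unop c' • unop c • z)
    rw [unop_mul, mul_smul]
  smul_zero c := by ext z; rfl
  smul_add c f g := by ext z; rfl
  add_smul c c' f := by
    ext z
    show f (unop (c + c') • z) = f (unop c • z) + f (unop c' • z)
    rw [unop_add, add_smul, map_add]
  zero_smul f := by
    ext z
    show f (unop (0 : Aᵐᵒᵖ) • z) = 0
    rw [unop_zero, zero_smul, map_zero]

/-- The "other side" module structure on `M →ₗ[A] A` acting through the domain. -/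
def stmt8.dualMod : Module A (M →ₗ[A] A) where
  smul a f := f ∘ₗ stmt8.rmulA A M a
  one_smul f := by
    ext z
    show f (op (1 : A) • z) = f z
    rw [op_one, one_smul]
  mul_smul a a' f := by
    ext z
    show f (op (a * a') • z) = f (op a' • op a • z)
    rw [op_mul, mul_smul]
  smul_zero a := by ext z; rfl
  smul_add a f g := by ext z; rfl
  add_smul a a' f := by
    ext z
    show f (op (a + a') • z) = f (op a • z) + f (op a' • z)
    rw [op_add, add_smul, map_add]
  zero_smul f := by
    ext z
    show f (op (0 : A) • z) = 0
    rw [op_zero, zero_smul, map_zero]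

end aux

/-- Let `M` be a bimodule over an algebra `A` (left `A`-action and right
action written as a left `Aᵐᵒᵖ`-action, commuting with each other).  Then:
`M` has a left dual in the monoidal category of `A`-bimodules — i.e. there exist a bimodule
`M'`, an `A`-balanced `A`-bimodule evaluation pairing `ev : M' ⊗_A M → A` and a finite
coevaluation family `coev(1) = ∑ᵢ mᵢ ⊗ m'ᵢ ∈ M ⊗_A M'` satisfying the two snake
identities — if and only if `M` is finitely generated and projective as a right `A`-module;
and dually, `M` has a right dual if and only if `M` is finitely generated and projective as
a left `A`-module. -/
theorem stmt_8 (A M : Type) [Ring A]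
    [AddCommGroup M] [Module A M] [Module Aᵐᵒᵖ M] [SMulCommClass A Aᵐᵒᵖ M] :
    ((∃ (M' : Type) (_ : AddCommGroup M') (_ : Module A M') (_ : Module Aᵐᵒᵖ M')
        (_ : SMulCommClass A Aᵐᵒᵖ M') (ev : M' → M → A)
        (ι : Type) (_ : Fintype ι) (m : ι → M) (m' : ι → M'),
        (∀ x y z, ev (x + y) z = ev x z + ev y z) ∧
        (∀ x y z, ev x (y + z) = ev x y + ev x z) ∧
        -- ev is a bimodule map M' ⊗_A M → A
        (∀ (a : A) x z, ev (a • x) z = a * ev x z) ∧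
        (∀ (b : A) x z, ev x (op b • z) = ev x z * b) ∧
        -- ev is A-balanced
        (∀ (a : A) x z, ev (op a • x) z = ev x (a • z)) ∧
        -- snake identities
        (∀ x : M', ∑ i, ev x (m i) • m' i = x) ∧
        (∀ z : M, ∑ i, op (ev (m' i) z) • m i = z)) ↔
      (Module.Finite Aᵐᵒᵖ M ∧ Module.Projective Aᵐᵒᵖ M)) ∧
    ((∃ (N : Type) (_ : AddCommGroup N) (_ : Module A N) (_ : Module Aᵐᵒᵖ N)
        (_ : SMulCommClass A Aᵐᵒᵖ N) (ev : M → N → A)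
        (ι : Type) (_ : Fintype ι) (n' : ι → N) (n : ι → M),
        (∀ x y z, ev (x + y) z = ev x z + ev y z) ∧
        (∀ x y z, ev x (y + z) = ev x y + ev x z) ∧
        -- ev is a bimodule map M ⊗_A N → A
        (∀ (a : A) x z, ev (a • x) z = a * ev x z) ∧
        (∀ (b : A) x z, ev x (op b • z) = ev x z * b) ∧
        -- ev is A-balanced
        (∀ (a : A) x z, ev (op a • x) z = ev x (a • z)) ∧
        -- snake identities
        (∀ z : M, ∑ i, ev z (n' i) • n i = z) ∧
        (∀ x : N, ∑ i, op (ev (n i) x) • n' i = x)) ↔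
      (Module.Finite A M ∧ Module.Projective A M)) := by
  constructor
  · -- Part 1: left dual ↔ fg projective as right `A`-module
    constructor
    · rintro ⟨M', _, _, _, _, ev, ι, _, m, m', h1, h2, h3, h4, h5, h6, h7⟩
      -- from the dual-basis data, build a split surjection (ι → Aᵐᵒᵖ) → M
      let π : (ι → Aᵐᵒᵖ) →ₗ[Aᵐᵒᵖ] M :=
        { toFun := fun g => ∑ i, g i • m i
          map_add' := fun g h => by
            simp [add_smul, Finset.sum_add_distrib]
          map_smul' := fun c g => by
            simp [mul_smul, Finset.smul_sum] }
      let s : M →ₗ[Aᵐᵒᵖ] (ι → Aᵐᵒᵖ) :=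
        { toFun := fun z i => op (ev (m' i) z)
          map_add' := fun z w => by
            funext i
            simp [h2]
          map_smul' := fun c z => by
            funext i
            show op (ev (m' i) (c • z)) = c * op (ev (m' i) z)
            have hc : c • z = op (unop c) • z := by simp
            rw [hc, h4, op_mul, op_unop] }
      have hsec : ∀ z : M, π (s z) = z := fun z => h7 z
      have hsurj : Function.Surjective π := fun z => ⟨s z, hsec z⟩
      refine ⟨Module.Finite.of_surjective π hsurj, Module.Projective.of_split s π ?_⟩
      ext z
      exact hsec z
    · rintro ⟨hfin, hproj⟩
      obtain ⟨n, π₀, hπ₀⟩ := Module.Finite.exists_fin' Aᵐᵒᵖ M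
      obtain ⟨s, hs⟩ := Module.projective_lifting_property π₀ LinearMap.id hπ₀
      have hsec : ∀ z : M, π₀ (s z) = z := fun z =>
        congrFun (congrArg DFunLike.coe hs) z
      have hdecomp : ∀ g : Fin n → Aᵐᵒᵖ, π₀ g = ∑ i, g i • π₀ (Pi.single i 1) := by
        intro g
        conv_lhs => rw [← Finset.univ_sum_single g]
        rw [map_sum]
        refine Finset.sum_congr rfl fun i _ => ?_
        rw [← map_smul]
        congr 1
        rw [← Pi.single_smul, smul_eq_mul, mul_one]
      -- the left dual
      letI i4 : Module Aᵐᵒᵖ (M →ₗ[Aᵐᵒᵖ] A) := stmt8.dualModOp A M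
      haveI i5 : SMulCommClass A Aᵐᵒᵖ (M →ₗ[Aᵐᵒᵖ] A) := ⟨fun a c f => by ext z; rfl⟩
      let m' : Fin n → (M →ₗ[Aᵐᵒᵖ] A) := fun i =>
        { toFun := fun z => unop (s z i)
          map_add' := fun z w => by simp
          map_smul' := fun c z => by
            show unop (s (c • z) i) = c • unop (s z i)
            rw [map_smul]
            show unop (c * s z i) = c • unop (s z i)
            rw [unop_mul]
            rfl }
      refine ⟨M →ₗ[Aᵐᵒᵖ] A, inferInstance, inferInstance, i4, i5,
        fun x z => x z, Fin n, inferInstance, fun i => π₀ (Pi.single i 1), m',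
        ?_, ?_, ?_, ?_, ?_, ?_, ?_⟩
      · intro x y z; rfl
      · intro x y z; exact map_add x y z
      · intro a x z; rfl
      · intro b x z
        show x (op b • z) = x z * b
        rw [map_smul]
        rfl
      · intro a x z; rfl
      · intro x
        ext z
        rw [LinearMap.sum_apply]
        have hz : x z = ∑ i, x (π₀ (Pi.single i 1)) * unop (s z i) := by
          conv_lhs => rw [← hsec z, hdecomp (s z)]
          rw [map_sum]
          refine Finset.sum_congr rfl fun i _ => ?_
          rw [map_smul]
          rfl
        rw [hz]
        refine Finset.sum_congr rfl fun i _ => ?_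
        rfl
      · intro z
        refine Eq.trans ?_ ((hdecomp (s z)).symm.trans (hsec z))
        refine Finset.sum_congr rfl fun i _ => ?_
        show op (unop (s z i)) • π₀ (Pi.single i 1) = s z i • π₀ (Pi.single i 1)
        rw [op_unop]
    -- Part 2: right dual ↔ fg projective as left `A`-module
  · constructor
    · rintro ⟨N, _, _, _, _, ev, ι, _, n', nn, h1, h2, h3, h4, h5, h6, h7⟩
      let π : (ι → A) →ₗ[A] M :=
        { toFun := fun g => ∑ i, g i • nn i
          map_add' := fun g h => by
            simp [add_smul, Finset.sum_add_distrib]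
          map_smul' := fun c g => by
            simp [mul_smul, Finset.smul_sum] }
      let s : M →ₗ[A] (ι → A) :=
        { toFun := fun z i => ev z (n' i)
          map_add' := fun z w => by
            funext i
            simp [h1]
          map_smul' := fun c z => by
            funext i
            exact h3 c z (n' i) }
      have hsec : ∀ z : M, π (s z) = z := fun z => h6 z
      have hsurj : Function.Surjective π := fun z => ⟨s z, hsec z⟩
      refine ⟨Module.Finite.of_surjective π hsurj, Module.Projective.of_split s π ?_⟩
      ext z
      exact hsec z
    · rintro ⟨hfin, hproj⟩
      obtain ⟨n, π₀, hπ₀⟩ := Module.Finite.exists_fin' A M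
      obtain ⟨s, hs⟩ := Module.projective_lifting_property π₀ LinearMap.id hπ₀
      have hsec : ∀ z : M, π₀ (s z) = z := fun z =>
        congrFun (congrArg DFunLike.coe hs) z
      have hdecomp : ∀ g : Fin n → A, π₀ g = ∑ i, g i • π₀ (Pi.single i 1) := by
        intro g
        conv_lhs => rw [← Finset.univ_sum_single g]
        rw [map_sum]
        refine Finset.sum_congr rfl fun i _ => ?_
        rw [← map_smul]
        congr 1
        rw [← Pi.single_smul, smul_eq_mul, mul_one]
      letI i3 : Module A (M →ₗ[A] A) := stmt8.dualMod A M
      haveI i5 : SMulCommClass A Aᵐᵒᵖ (M →ₗ[A] A) := ⟨fun a c f => by ext z; rfl⟩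
      let n' : Fin n → (M →ₗ[A] A) := fun i =>
        { toFun := fun z => s z i
          map_add' := fun z w => by simp
          map_smul' := fun c z => by
            show s (c • z) i = c • s z i
            rw [map_smul]
            rfl }
      refine ⟨M →ₗ[A] A, inferInstance, i3, inferInstance, i5,
        fun z x => x z, Fin n, inferInstance, n', fun i => π₀ (Pi.single i 1),
        ?_, ?_, ?_, ?_, ?_, ?_, ?_⟩
      · intro x y z; exact map_add z x y
      · intro x y z; rfl
      · intro a x z; exact map_smul z a x
      · intro b x z; rfl
      · intro a x z; rfl
      · intro z
        exact (hdecomp (s z)).symm.trans (hsec z)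
      · intro x
        ext z
        rw [LinearMap.sum_apply]
        have hz : x z = ∑ i, s z i * x (π₀ (Pi.single i 1)) := by
          conv_lhs => rw [← hsec z, hdecomp (s z)]
          rw [map_sum]
          refine Finset.sum_congr rfl fun i _ => ?_
          rw [map_smul]
          rfl
        rw [hz]
        refine Finset.sum_congr rfl fun i _ => ?_
        rfl
end

section
/- Let (A, 𝔛¹) be a Lie–Rinehart algebra with 𝔛¹ finitely generated projective over the commutative algebra A, with dual Ω¹ and dual bases {x_i}, {ω_i}. Define d : A → Ω¹ by da = Σ_i x_i(a) ω_i and d : Ω¹ → ⋀²_A Ω¹ by dω = Σ_{i<j} [x_i(ev(x_j⊗ω)) − x_j(ev(x_i⊗ω)) − ev([x_i,x_j]⊗ω)] ω_i ∧ ω_j. Then d : Ω¹ → ⋀²Ω¹ satisfies the graded Leibniz rule d(aω) = da ∧ ω + a dω for all a ∈ A, ω ∈ Ω¹, and d∘d = 0 on A. -/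
/-!
Both identities are computed in the frame `ωᵢ ∧ ωⱼ`. Every element of `Ω¹` expands as
`ω = ∑ ω(xᵢ) ωᵢ`, and antisymmetry `ωⱼ ∧ ωᵢ = -ωᵢ ∧ ωⱼ` folds a full double sum of
`gᵢⱼ ωᵢ ∧ ωⱼ` onto `i < j` with coefficients `gᵢⱼ - gⱼᵢ`. For the Leibniz rule the
coefficient of `d(aω)` differs from that of `a dω` by `xᵢ(a) ω(xⱼ) - xⱼ(a) ω(xᵢ)`, the
derivation rule applied to `xᵢ(a ω(xⱼ))`, which is exactly the folded coefficient of
`da ∧ ω`. For `d ∘ d = 0` one has `(da)(x) = x(a)`, so the coefficients of `d(da)` are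
`xᵢ(xⱼ a) - xⱼ(xᵢ a) - [xᵢ, xⱼ](a)`, which vanish because the anchor is a Lie map.
-/

open Finset

namespace ExteriorAlgebra

variable {R M : Type*} [CommRing R] [AddCommGroup M] [Module R M]
variable {κ : Type*} [Fintype κ]

theorem ι_sum_smul_mul_ι_sum_smul (v : κ → M) (a b : κ → R) :
    ι R (∑ i, a i • v i) * ι R (∑ j, b j • v j) =
      ∑ i, ∑ j, (a i * b j) • (ι R (v i) * ι R (v j)) := by
  rw [map_sum, map_sum, sum_mul]
  simp only [mul_sum, map_smul, smul_mul_smul_comm]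

theorem sum_sum_smul_ι_mul_ι_eq_sum_lt [LinearOrder κ] (v : κ → M) (g : κ → κ → R) :
    ∑ i, ∑ j, g i j • (ι R (v i) * ι R (v j)) =
      ∑ i, ∑ j, if i < j then (g i j - g j i) • (ι R (v i) * ι R (v j)) else 0 := by
  set e : κ → κ → ExteriorAlgebra R M := fun i j => ι R (v i) * ι R (v j)
  have e_swap : ∀ i j, e j i = -e i j := fun i j =>
    eq_neg_of_add_eq_zero_left (ι_add_mul_swap (v j) (v i))
  have split : ∀ i j, g i j • e i j =
      (if i < j then g i j • e i j else 0) + (if j < i then g i j • e i j else 0) := by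
    intro i j
    rcases lt_trichotomy i j with h | rfl | h
    · simp [h, h.not_gt]
    · simp [e]
    · simp [h, h.not_gt]
  calc ∑ i, ∑ j, g i j • e i j
      = (∑ i, ∑ j, if i < j then g i j • e i j else 0)
          + ∑ i, ∑ j, if j < i then g i j • e i j else 0 := by
        simp only [← sum_add_distrib, ← split]
    _ = (∑ i, ∑ j, if i < j then g i j • e i j else 0)
          + ∑ i, ∑ j, if i < j then -g j i • e i j else 0 := by
        rw [sum_comm (f := fun i j => if j < i then g i j • e i j else 0)]
        refine congrArg _ (sum_congr rfl fun i _ => sum_congr rfl fun j _ => ?_)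
        rw [e_swap, smul_neg, neg_smul]
    _ = ∑ i, ∑ j, if i < j then (g i j - g j i) • e i j else 0 := by
        simp only [← sum_add_distrib]
        refine sum_congr rfl fun i _ => sum_congr rfl fun j _ => ?_
        split_ifs
        · rw [sub_eq_add_neg, add_smul]
        · rw [add_zero]

end ExteriorAlgebra

section DualBases

variable {R M : Type*} [CommRing R] [AddCommGroup M] [Module R M]
variable {κ : Type*} [Fintype κ] {xb : κ → M} {ωb : κ → M →ₗ[R] R}

theorem sum_apply_smul_eq_of_dual (hdual : ∀ x : M, ∑ i, ωb i x • xb i = x)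
    (f : M →ₗ[R] R) : ∑ i, f (xb i) • ωb i = f := by
  ext x
  conv_rhs => rw [← hdual x]
  simp [map_sum, mul_comm]

theorem sum_smul_dual_apply_of_additive_homogeneous
    (hdual : ∀ x : M, ∑ i, ωb i x • xb i = x) (φ : M → R)
    (hadd : ∀ x y, φ (x + y) = φ x + φ y) (hsmul : ∀ (r : R) x, φ (r • x) = r * φ x) (x : M) :
    (∑ i, φ (xb i) • ωb i) x = φ x :=
  LinearMap.congr_fun (sum_apply_smul_eq_of_dual hdual ⟨⟨φ, hadd⟩, hsmul⟩) x

end DualBases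

theorem stmt_15_general (A : Type*) [CommRing A]
    (X : Type*) [AddCommGroup X] [Module A X] [LieRing X]
    -- the anchor map, written `τ x a = x(a)`
    (τ : X → A → A)
    (hτ_add : ∀ x y a, τ (x + y) a = τ x a + τ y a)
    (hτ_der : ∀ x a b, τ x (a * b) = a * τ x b + τ x a * b)
    (hτ_lie : ∀ x y a, τ ⁅x, y⁆ a = τ x (τ y a) - τ y (τ x a))
    (hτ_lin : ∀ (a : A) x b, τ (a • x) b = a * τ x b)
    -- dual bases for the fgp module X, with Ω¹ = Hom_A(X, A) and ev(x ⊗ ω) = ω x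
    (n : ℕ) (xb : Fin n → X) (ωb : Fin n → (X →ₗ[A] A))
    (hdual : ∀ x : X, ∑ i, (ωb i) x • xb i = x) :
    -- the degree-1 differential, valued in the exterior algebra of Ω¹ = Hom_A(X,A)
    ∀ d1 : (X →ₗ[A] A) → ExteriorAlgebra A (X →ₗ[A] A),
      (∀ ω : X →ₗ[A] A,
        d1 ω = ∑ i, ∑ j, if i < j then
          (τ (xb i) (ω (xb j)) - τ (xb j) (ω (xb i)) - ω ⁅xb i, xb j⁆) •
            (ExteriorAlgebra.ι A (ωb i) * ExteriorAlgebra.ι A (ωb j)) else 0) →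
      -- graded Leibniz rule
      ((∀ (a : A) (ω : X →ₗ[A] A),
        d1 (a • ω) =
          ExteriorAlgebra.ι A (∑ i, τ (xb i) a • ωb i) * ExteriorAlgebra.ι A ω
            + a • d1 ω) ∧
      -- d ∘ d = 0 on A
      (∀ a : A, d1 (∑ i, τ (xb i) a • ωb i) = 0)) := by
  intro d1 hd1
  constructor
  · intro a ω
    have da_wedge := ExteriorAlgebra.ι_sum_smul_mul_ι_sum_smul ωb (fun i => τ (xb i) a)
      (fun j => ω (xb j))
    rw [sum_apply_smul_eq_of_dual hdual,
      ExteriorAlgebra.sum_sum_smul_ι_mul_ι_eq_sum_lt] at da_wedge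
    rw [hd1, hd1, da_wedge, smul_sum, ← sum_add_distrib]
    refine sum_congr rfl fun i _ => ?_
    rw [smul_sum, ← sum_add_distrib]
    refine sum_congr rfl fun j _ => ?_
    split_ifs
    · simp only [LinearMap.smul_apply, smul_eq_mul, hτ_der, smul_smul, ← add_smul]
      ring_nf
    · simp
  · intro a
    have da_apply : ∀ x, (∑ i, τ (xb i) a • ωb i) x = τ x a :=
      sum_smul_dual_apply_of_additive_homogeneous hdual (fun x => τ x a)
        (fun x y => hτ_add x y a) (fun r x => hτ_lin r x a)
    rw [hd1]
    refine sum_eq_zero fun i _ => sum_eq_zero fun j _ => ?_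
    simp [da_apply, hτ_lie]

/-- Let `(A, 𝔛¹)` be a Lie–Rinehart algebra with `𝔛¹ = X` finitely
generated projective over the commutative algebra `A`, with dual `Ω¹ = Hom_A(X, A)` and
dual bases `{xb i}`, `{ωb i}` (indexed by `Fin n`).  Define `d : A → Ω¹` by
`d a = ∑ i, (xb i)(a) • ωb i` and `d : Ω¹ → ⋀² Ω¹` by
`d ω = ∑_{i<j} [xᵢ(ev(xⱼ⊗ω)) − xⱼ(ev(xᵢ⊗ω)) − ev([xᵢ,xⱼ]⊗ω)] ωᵢ ∧ ωⱼ`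
(computed inside the exterior algebra of `Ω¹`).  Then `d : Ω¹ → ⋀²Ω¹` satisfies the graded
Leibniz rule `d (a • ω) = d a ∧ ω + a • d ω`, and `d ∘ d = 0` on `A`. -/
theorem stmt_15 (A : Type*) [CommRing A]
    (X : Type*) [AddCommGroup X] [Module A X] [LieRing X]
    [Module.Finite A X] [Module.Projective A X]
    -- the anchor map, written `τ x a = x(a)`
    (τ : X → A → A)
    (hτ_add : ∀ x y a, τ (x + y) a = τ x a + τ y a)
    (hτ_add' : ∀ x a b, τ x (a + b) = τ x a + τ x b)
    (hτ_der : ∀ x a b, τ x (a * b) = a * τ x b + τ x a * b)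
    (hτ_lie : ∀ x y a, τ ⁅x, y⁆ a = τ x (τ y a) - τ y (τ x a))
    (hτ_lin : ∀ (a : A) x b, τ (a • x) b = a * τ x b)
    (hlie_smul : ∀ (a : A) (x y : X), ⁅x, a • y⁆ = τ x a • y + a • ⁅x, y⁆)
    -- dual bases for the fgp module X, with Ω¹ = Hom_A(X, A) and ev(x ⊗ ω) = ω x
    (n : ℕ) (xb : Fin n → X) (ωb : Fin n → (X →ₗ[A] A))
    (hdual : ∀ x : X, ∑ i, (ωb i) x • xb i = x) :
    -- the degree-1 differential, valued in the exterior algebra of Ω¹ = Hom_A(X,A)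
    ∀ d1 : (X →ₗ[A] A) → ExteriorAlgebra A (X →ₗ[A] A),
      (∀ ω : X →ₗ[A] A,
        d1 ω = ∑ i, ∑ j, if i < j then
          (τ (xb i) (ω (xb j)) - τ (xb j) (ω (xb i)) - ω ⁅xb i, xb j⁆) •
            (ExteriorAlgebra.ι A (ωb i) * ExteriorAlgebra.ι A (ωb j)) else 0) →
      -- graded Leibniz rule
      ((∀ (a : A) (ω : X →ₗ[A] A),
        d1 (a • ω) =
          ExteriorAlgebra.ι A (∑ i, τ (xb i) a • ωb i) * ExteriorAlgebra.ι A ω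
            + a • d1 ω) ∧
      -- d ∘ d = 0 on A
      (∀ a : A, d1 (∑ i, τ (xb i) a • ωb i) = 0)) :=
  stmt_15_general A X τ hτ_add hτ_der hτ_lie hτ_lin n xb ωb hdual
end

section
/- Let Γ = (V, E) be a finite quiver, A = k(V), and T𝔛¹_• the algebra generated by A and symbols {e̲ : e ∈ E} subject to: f_p · f_q = δ_{p,q} f_q; f_p · e̲ = δ_{p,t(e)} e̲; and e̲ · f_p = δ_{p,s(e)}(e̲ − f_{t(e)}) + δ_{p,t(e)} f_{t(e)} for all e ∈ E, p, q ∈ V. Then T𝔛¹_• is isomorphic as a k-algebra to the path algebra kΓ, via the map sending f_p ↦ f_p and the arrow e ↦ e̲ − f_{t(e)}. -/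
open Finset

section

variable (k : Type*) [Field k] (V E : Type*) [Fintype V] [DecidableEq V]
  (s t : E → V)

/-- Defining relations of the path algebra `kΓ` of the finite quiver `Γ = (V, E)`, as a
quotient of the free algebra on the vertex idempotents `f_p` (p ∈ V) and arrows `e` (e ∈ E):
`f_p f_q = δ_{p,q} f_q`, `∑_p f_p = 1`, `f_p · e = δ_{p, t e} e`, `e · f_p = δ_{p, s e} e`. -/
inductive pathRel : FreeAlgebra k (V ⊕ E) → FreeAlgebra k (V ⊕ E) → Prop
  | vert (p q : V) : pathRel (FreeAlgebra.ι k (Sum.inl p) * FreeAlgebra.ι k (Sum.inl q))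
      (if p = q then FreeAlgebra.ι k (Sum.inl q) else 0)
  | unit : pathRel (∑ p : V, FreeAlgebra.ι k (Sum.inl p)) 1
  | tgt (p : V) (e : E) : pathRel (FreeAlgebra.ι k (Sum.inl p) * FreeAlgebra.ι k (Sum.inr e))
      (if p = t e then FreeAlgebra.ι k (Sum.inr e) else 0)
  | src (e : E) (p : V) : pathRel (FreeAlgebra.ι k (Sum.inr e) * FreeAlgebra.ι k (Sum.inl p))
      (if p = s e then FreeAlgebra.ι k (Sum.inr e) else 0)

/-- Defining relations of the algebra `T𝔛¹_•` of the quiver calculus: same generators as the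
path algebra, with the modified relation
`e̲ · f_p = δ_{p, s e} (e̲ − f_{t e}) + δ_{p, t e} f_{t e}`. -/
inductive txRel : FreeAlgebra k (V ⊕ E) → FreeAlgebra k (V ⊕ E) → Prop
  | vert (p q : V) : txRel (FreeAlgebra.ι k (Sum.inl p) * FreeAlgebra.ι k (Sum.inl q))
      (if p = q then FreeAlgebra.ι k (Sum.inl q) else 0)
  | unit : txRel (∑ p : V, FreeAlgebra.ι k (Sum.inl p)) 1
  | tgt (p : V) (e : E) : txRel (FreeAlgebra.ι k (Sum.inl p) * FreeAlgebra.ι k (Sum.inr e))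
      (if p = t e then FreeAlgebra.ι k (Sum.inr e) else 0)
  | src (e : E) (p : V) : txRel (FreeAlgebra.ι k (Sum.inr e) * FreeAlgebra.ι k (Sum.inl p))
      ((if p = s e then FreeAlgebra.ι k (Sum.inr e) - FreeAlgebra.ι k (Sum.inl (t e)) else 0)
        + (if p = t e then FreeAlgebra.ι k (Sum.inl (t e)) else 0))

end

section Aux

variable (k : Type*) [Field k] (V E : Type*) [Fintype V] [DecidableEq V]
  (s t : E → V)

/-- Generator map for the forward direction. -/
noncomputable def fwdGen : V ⊕ E → RingQuot (txRel k V E s t) :=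
  Sum.elim
    (fun p => RingQuot.mkAlgHom k (txRel k V E s t) (FreeAlgebra.ι k (Sum.inl p)))
    (fun e => RingQuot.mkAlgHom k (txRel k V E s t)
      (FreeAlgebra.ι k (Sum.inr e) - FreeAlgebra.ι k (Sum.inl (t e))))

/-- Generator map for the backward direction. -/
noncomputable def bwdGen : V ⊕ E → RingQuot (pathRel k V E s t) :=
  Sum.elim
    (fun p => RingQuot.mkAlgHom k (pathRel k V E s t) (FreeAlgebra.ι k (Sum.inl p)))
    (fun e => RingQuot.mkAlgHom k (pathRel k V E s t)
      (FreeAlgebra.ι k (Sum.inr e) + FreeAlgebra.ι k (Sum.inl (t e))))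

lemma fwd_rel : ∀ ⦃x y⦄, pathRel k V E s t x y →
    ((FreeAlgebra.lift k (fwdGen k V E s t)) x = (FreeAlgebra.lift k (fwdGen k V E s t)) y) := by
  intro x y h
  have vert := fun p q => RingQuot.mkAlgHom_rel k (txRel.vert (k := k) (s := s) (t := t) p q)
  have tgt := fun p e => RingQuot.mkAlgHom_rel k (txRel.tgt (k := k) (s := s) (t := t) p e)
  have src := fun e p => RingQuot.mkAlgHom_rel k (txRel.src (k := k) (s := s) (t := t) e p)
  have unit := RingQuot.mkAlgHom_rel k (txRel.unit (k := k) (V := V) (E := E) (s := s) (t := t))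
  induction h with
  | vert p q =>
      rw [map_mul]
      simp only [FreeAlgebra.lift_ι_apply, fwdGen, Sum.elim_inl]
      rw [← map_mul, vert p q]
      split_ifs <;> simp [fwdGen, FreeAlgebra.lift_ι_apply]
  | unit =>
      rw [map_sum, map_one]
      simp only [FreeAlgebra.lift_ι_apply, fwdGen, Sum.elim_inl]
      rw [← map_sum, unit, map_one]
  | tgt p e =>
      rw [map_mul]
      simp only [FreeAlgebra.lift_ι_apply, fwdGen, Sum.elim_inl, Sum.elim_inr]
      rw [map_sub, mul_sub, ← map_mul, ← map_mul, tgt p e, vert p (t e)]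
      split_ifs with h <;> simp [fwdGen, FreeAlgebra.lift_ι_apply, map_sub, h]
  | src e p =>
      rw [map_mul]
      simp only [FreeAlgebra.lift_ι_apply, fwdGen, Sum.elim_inl, Sum.elim_inr]
      rw [map_sub, sub_mul, ← map_mul, ← map_mul, src e p, vert (t e) p]
      rcases eq_or_ne p (t e) with ht | ht
      · subst ht
        simp [fwdGen, FreeAlgebra.lift_ι_apply, apply_ite, map_add, map_sub, map_zero,
          add_sub_cancel_right]
        try (split_ifs <;> simp_all)
      · simp [fwdGen, FreeAlgebra.lift_ι_apply, apply_ite, map_add, map_sub, map_zero,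
          ht, Ne.symm ht]
        try (split_ifs <;> simp_all)

lemma bwd_rel : ∀ ⦃x y⦄, txRel k V E s t x y →
    ((FreeAlgebra.lift k (bwdGen k V E s t)) x = (FreeAlgebra.lift k (bwdGen k V E s t)) y) := by
  intro x y h
  have vert := fun p q => RingQuot.mkAlgHom_rel k (pathRel.vert (k := k) (s := s) (t := t) p q)
  have tgt := fun p e => RingQuot.mkAlgHom_rel k (pathRel.tgt (k := k) (s := s) (t := t) p e)
  have src := fun e p => RingQuot.mkAlgHom_rel k (pathRel.src (k := k) (s := s) (t := t) e p)
  have unit := RingQuot.mkAlgHom_rel k (pathRel.unit (k := k) (V := V) (E := E) (s := s) (t := t))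
  induction h with
  | vert p q =>
      rw [map_mul]
      simp only [FreeAlgebra.lift_ι_apply, bwdGen, Sum.elim_inl]
      rw [← map_mul, vert p q]
      split_ifs <;> simp [bwdGen, FreeAlgebra.lift_ι_apply]
  | unit =>
      rw [map_sum, map_one]
      simp only [FreeAlgebra.lift_ι_apply, bwdGen, Sum.elim_inl]
      rw [← map_sum, unit, map_one]
  | tgt p e =>
      rw [map_mul]
      simp only [FreeAlgebra.lift_ι_apply, bwdGen, Sum.elim_inl, Sum.elim_inr]
      rw [map_add, mul_add, ← map_mul, ← map_mul, tgt p e, vert p (t e)]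
      split_ifs with h <;> simp [bwdGen, FreeAlgebra.lift_ι_apply, map_add, h]
  | src e p =>
      rw [map_mul]
      simp only [FreeAlgebra.lift_ι_apply, bwdGen, Sum.elim_inl, Sum.elim_inr]
      rw [map_add, add_mul, ← map_mul, ← map_mul, src e p, vert (t e) p]
      rcases eq_or_ne p (t e) with ht | ht
      · subst ht
        simp [bwdGen, FreeAlgebra.lift_ι_apply, apply_ite, map_add, map_sub, map_zero,
          add_sub_cancel_right]
        try (split_ifs <;> simp_all)
      · simp [bwdGen, FreeAlgebra.lift_ι_apply, apply_ite, map_add, map_sub, map_zero,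
          ht, Ne.symm ht]
        try (split_ifs <;> simp_all)

/-- Forward algebra hom. -/
noncomputable def fwd : RingQuot (pathRel k V E s t) →ₐ[k] RingQuot (txRel k V E s t) :=
  RingQuot.liftAlgHom k ⟨FreeAlgebra.lift k (fwdGen k V E s t), fwd_rel k V E s t⟩

/-- Backward algebra hom. -/
noncomputable def bwd : RingQuot (txRel k V E s t) →ₐ[k] RingQuot (pathRel k V E s t) :=
  RingQuot.liftAlgHom k ⟨FreeAlgebra.lift k (bwdGen k V E s t), bwd_rel k V E s t⟩

lemma fwd_mk (x) : fwd k V E s t (RingQuot.mkAlgHom k (pathRel k V E s t) x) =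
    FreeAlgebra.lift k (fwdGen k V E s t) x := by
  rw [fwd, RingQuot.liftAlgHom_mkAlgHom_apply]

lemma bwd_mk (x) : bwd k V E s t (RingQuot.mkAlgHom k (txRel k V E s t) x) =
    FreeAlgebra.lift k (bwdGen k V E s t) x := by
  rw [bwd, RingQuot.liftAlgHom_mkAlgHom_apply]

end Aux

/-- For a finite quiver `Γ = (V, E)` over a field `k`, the algebra
`T𝔛¹_•` (generated by `A = k(V)` and the vector fields `e̲`, subject to the relations
above) is isomorphic as a `k`-algebra to the path algebra `kΓ`, via `f_p ↦ f_p` and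
`e ↦ e̲ − f_{t e}` on generators. -/
theorem stmt_18 (k : Type*) [Field k] (V E : Type*) [Fintype V] [DecidableEq V]
    (s t : E → V) :
    ∃ φ : RingQuot (pathRel k V E s t) ≃ₐ[k] RingQuot (txRel k V E s t),
      (∀ p : V,
        φ (RingQuot.mkAlgHom k (pathRel k V E s t) (FreeAlgebra.ι k (Sum.inl p))) =
          RingQuot.mkAlgHom k (txRel k V E s t) (FreeAlgebra.ι k (Sum.inl p))) ∧
      (∀ e : E,
        φ (RingQuot.mkAlgHom k (pathRel k V E s t) (FreeAlgebra.ι k (Sum.inr e))) =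
          RingQuot.mkAlgHom k (txRel k V E s t)
            (FreeAlgebra.ι k (Sum.inr e) - FreeAlgebra.ι k (Sum.inl (t e)))) := by
  classical
  refine ⟨AlgEquiv.ofAlgHom (fwd k V E s t) (bwd k V E s t) ?_ ?_, ?_, ?_⟩
  · apply RingQuot.ringQuot_ext'
    apply FreeAlgebra.hom_ext
    funext x
    rcases x with p | e <;>
      simp [AlgHom.comp_apply, fwd_mk, bwd_mk, bwdGen, fwdGen, map_add, map_sub,
        FreeAlgebra.lift_ι_apply, add_sub_cancel_right, sub_add_cancel]
  · apply RingQuot.ringQuot_ext'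
    apply FreeAlgebra.hom_ext
    funext x
    rcases x with p | e <;>
      simp [AlgHom.comp_apply, fwd_mk, bwd_mk, bwdGen, fwdGen, map_add, map_sub,
        FreeAlgebra.lift_ι_apply, add_sub_cancel_right, sub_add_cancel]
  · intro p
    show fwd k V E s t _ = _
    rw [fwd_mk]
    simp [fwdGen, FreeAlgebra.lift_ι_apply]
  · intro e
    show fwd k V E s t _ = _
    rw [fwd_mk]
    simp [fwdGen, FreeAlgebra.lift_ι_apply]
end
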